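/- The inclusion of the category of families into the partial-function category induces a bijection on isomorphisms: for families A, B : I → Type and any J : I → Type, the type of isomorphisms A ≅ B in the category of families (Hom = ∀ i, A i → B i, componentwise composition) is equivalent to the type of isomorphisms A ≅ B in the partial-function category U_J^I. -/
import Mathlib


open CategoryTheory

/-- Objects of the category `Fam(I)` of `I`-indexed families. -/
structure FamObj (I : Type u) where
  fam : I → Type v

instance famCategory (I : Type u) : Category.{max u v} (FamObj.{u, v} I) where
  Hom A B := ∀ i, A.fam i → B.fam i
  id A := fun _ a => a
  comp f g := fun i a => g i (f i a)

/-- Objects of the partial-function category `U_J^I`. -/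
structure PartObj (I : Type u) (J : I → Type v) where
  fam : I → Type v

instance partCategory (I : Type u) (J : I → Type v) :
    Category.{max u v} (PartObj.{u, v} I J) where
  Hom A B := ∀ i, A.fam i → J i ⊕ B.fam i
  id A := fun _ a => Sum.inr a
  comp f g := fun i a => Sum.elim Sum.inl (g i) (f i a)
  comp_id f := by
    funext i a
    cases h : f i a <;> simp [h, CategoryStruct.comp, CategoryStruct.id]
  assoc f g h := by
    funext i a
    cases hf : f i a <;> simp [hf, CategoryStruct.comp]

/-- The inclusion functor `Fam(I) ⥤ U_J^I`: identity on objects, each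
component postcomposed with `inr`. -/
def inclusion (I : Type u) (J : I → Type v) : FamObj.{u, v} I ⥤ PartObj.{u, v} I J where
  obj A := ⟨A.fam⟩
  map f := fun i a => Sum.inr (f i a)
  map_comp f g := by
    funext i a
    simp [CategoryStruct.comp]

/-- The inclusion of families into partial functions induces a bijection on
isomorphisms: `A ≅ B` in `Fam(I)` corresponds to `A ≅ B` in `U_J^I`. -/
theorem inclusion_bijective_on_isos (I : Type u) (J : I → Type v)
    (A B : FamObj.{u, v} I) :
    Function.Bijective
      (fun e : A ≅ B => (inclusion I J).mapIso e) := by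
  constructor
  · intro e1 e2 h
    apply Iso.ext
    have hh := congrArg Iso.hom h
    funext i a
    have := congrFun (congrFun hh i) a
    have : Sum.inr (e1.hom i a) = (Sum.inr (e2.hom i a) : J i ⊕ B.fam i) := this
    exact Sum.inr.inj this
  · intro e
    have hhom : ∀ i a, ∃ b, e.hom i a = Sum.inr b := by
      intro i a
      have h1 : Sum.elim Sum.inl (e.inv i) (e.hom i a) = Sum.inr a :=
        congrFun (congrFun e.hom_inv_id i) a
      cases hx : e.hom i a with
      | inl j => rw [hx] at h1; simp at h1
      | inr b => exact ⟨b, rfl⟩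
    have hinv : ∀ i b, ∃ a, e.inv i b = Sum.inr a := by
      intro i b
      have h1 : Sum.elim Sum.inl (e.hom i) (e.inv i b) = Sum.inr b :=
        congrFun (congrFun e.inv_hom_id i) b
      cases hx : e.inv i b with
      | inl j => rw [hx] at h1; simp at h1
      | inr a => exact ⟨a, rfl⟩
    choose f hf using hhom
    choose g hg using hinv
    have hfg : ∀ i a, g i (f i a) = a := by
      intro i a
      have h1 : Sum.elim Sum.inl (e.inv i) (e.hom i a) = Sum.inr a :=
        congrFun (congrFun e.hom_inv_id i) a
      rw [hf, Sum.elim_inr, hg] at h1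
      exact Sum.inr.inj h1
    have hgf : ∀ i b, f i (g i b) = b := by
      intro i b
      have h1 : Sum.elim Sum.inl (e.hom i) (e.inv i b) = Sum.inr b :=
        congrFun (congrFun e.inv_hom_id i) b
      rw [hg, Sum.elim_inr, hf] at h1
      exact Sum.inr.inj h1
    refine ⟨⟨fun i a => f i a, fun i b => g i b, ?_, ?_⟩, ?_⟩
    · funext i a; exact hfg i a
    · funext i b; exact hgf i b
    · apply Iso.ext
      funext i a
      exact (hf i a).symm
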